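/- arXiv:math/0411424 — 4 statements merged into one kernel-verified Lean document; each statement's English description precedes it below -/
import Mathlib

section
/- Let $g(z_1,\dots,z_{n-1}) = \prod (1 + e_1 z_1 + \cdots + e_{n-1} z_{n-1})$, the product over all sign vectors $(e_i) \in \{1,-1\}^{n-1}$ except the all-minus vector $(-1,\dots,-1)$. Then the coefficient of $z_1 z_2 \cdots z_{n-1}$ in $g$ is $\pm(n-1)!$. -/
/-!
Let `F` be the product of `1 + ∑ eᵢ zᵢ` over *all* sign vectors `e`. Negating one variable
`zᵢ` permutes the factors of `F`, so every monomial of `F` has even exponents; in particular the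
only squarefree monomial occurring in `F` is `1`. Since `F = g · (1 - ∑ zᵢ)`, the coefficients
`c(T)` of the squarefree monomials `∏_{i ∈ T} zᵢ` of `g` satisfy `c(∅) = 1` and
`c(T) = ∑_{i ∈ T} c(T \ {i})`, whence `c(T) = |T|!`.
-/

open MvPolynomial Finset

section NegateVar

variable {σ R : Type*} [CommRing R]

theorem aeval_C_mul_X_monomial (ε : σ → R) (d : σ →₀ ℕ) (a : R) :
    aeval (fun j => C (ε j) * X j) (monomial d a) =
      monomial d (a * d.prod fun j k => ε j ^ k) := by
  simp only [aeval_monomial, mul_pow, Finsupp.prod_mul, ← map_pow, ← map_finsuppProd,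
    algebraMap_eq]
  rw [monomial_eq, C_mul, mul_assoc]

theorem coeff_aeval_C_mul_X (ε : σ → R) (p : MvPolynomial σ R) (d : σ →₀ ℕ) :
    coeff d (aeval (fun j => C (ε j) * X j) p) = (d.prod fun j k => ε j ^ k) * coeff d p := by
  classical
  induction p using MvPolynomial.induction_on' with
  | monomial e a =>
    rw [aeval_C_mul_X_monomial, coeff_monomial, coeff_monomial]
    split_ifs with h
    · subst h; ring
    · rw [mul_zero]
  | add p q hp hq => rw [map_add, coeff_add, coeff_add, hp, hq, mul_add]

noncomputable def negateVar [DecidableEq σ] (i : σ) :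
    MvPolynomial σ R →ₐ[R] MvPolynomial σ R :=
  aeval (fun j => C (Function.update (1 : σ → R) i (-1) j) * X j)

theorem coeff_negateVar_of_odd [DecidableEq σ] {i : σ} {d : σ →₀ ℕ} (hd : Odd (d i))
    (p : MvPolynomial σ R) : coeff d (negateVar i p) = -coeff d p := by
  have hsign : (d.prod fun j k => Function.update (1 : σ → R) i (-1) j ^ k) = -1 := by
    rw [Finsupp.prod, Finset.prod_eq_single i, Function.update_self, hd.neg_one_pow]
    · intro j _ hj; rw [Function.update_of_ne hj, Pi.one_apply, one_pow]
    · intro hi; rw [Finsupp.notMem_support_iff.mp hi] at hd; exact absurd hd (by decide)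
  rw [negateVar, coeff_aeval_C_mul_X, hsign, neg_one_mul]

end NegateVar

section SquarefreeCoeff

variable {ι R : Type*} [DecidableEq ι] [CommRing R]

theorem sum_single_one_apply (T : Finset ι) (i : ι) :
    (∑ j ∈ T, Finsupp.single j 1 : ι →₀ ℕ) i = if i ∈ T then 1 else 0 := by
  simp [Finsupp.finsetSum_apply, Finsupp.single_apply]

variable [Fintype ι]

theorem coeff_sum_single_mul_sum_X (p : MvPolynomial ι R) (T : Finset ι) :
    coeff (∑ j ∈ T, Finsupp.single j 1) (p * ∑ i, X i) =
      ∑ i ∈ T, coeff (∑ j ∈ T.erase i, Finsupp.single j 1) p := by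
  have hsupp : (∑ j ∈ T, Finsupp.single j 1 : ι →₀ ℕ).support = T := by
    ext i; simp [sum_single_one_apply]
  simp only [mul_sum, coeff_sum, coeff_mul_X', hsupp]
  rw [sum_ite_mem, univ_inter]
  refine sum_congr rfl fun i hi => ?_
  rw [← add_sum_erase _ _ hi, add_tsub_cancel_left]

theorem coeff_sum_single_eq_factorial {p : MvPolynomial ι R} (h0 : constantCoeff p = 1)
    (h : ∀ T : Finset ι, T.Nonempty →
      coeff (∑ j ∈ T, Finsupp.single j 1) (p * (1 - ∑ i, X i)) = 0)
    (T : Finset ι) : coeff (∑ j ∈ T, Finsupp.single j 1) p = T.card.factorial := by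
  induction T using Finset.strongInduction with
  | _ T ih =>
    rcases T.eq_empty_or_nonempty with rfl | hT
    · rw [sum_empty, ← constantCoeff_eq, h0, card_empty, Nat.factorial_zero,
        Nat.cast_one]
    have hrec : coeff (∑ j ∈ T, Finsupp.single j 1) p =
        ∑ i ∈ T, coeff (∑ j ∈ T.erase i, Finsupp.single j 1) p := by
      rw [← coeff_sum_single_mul_sum_X, ← sub_eq_zero, ← coeff_sub, ← mul_one_sub]
      exact h T hT
    calc coeff (∑ j ∈ T, Finsupp.single j 1) p
        = ∑ i ∈ T, ((T.card - 1).factorial : R) := by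
          rw [hrec]
          refine sum_congr rfl fun i hi => ?_
          rw [ih _ (erase_ssubset hi), card_erase_of_mem hi]
      _ = T.card.factorial := by
          rw [sum_const, nsmul_eq_mul, ← Nat.cast_mul, Nat.mul_factorial_pred hT.card_pos.ne']

end SquarefreeCoeff

section SignForm

variable {ι R : Type*} [Fintype ι] [CommRing R]

noncomputable def signForm (s : ι → Bool) : MvPolynomial ι R :=
  1 + ∑ i, (if s i then 1 else -1) * X i

theorem constantCoeff_signForm (s : ι → Bool) : constantCoeff (signForm (R := R) s) = 1 := by
  simp [signForm, apply_ite]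

theorem signForm_const_false : signForm (R := R) (fun _ : ι => false) = 1 - ∑ i, X i := by
  simp [signForm, sub_eq_add_neg]

variable [DecidableEq ι]

theorem negateVar_signForm (i : ι) (s : ι → Bool) :
    negateVar i (signForm s : MvPolynomial ι R) = signForm (Function.update s i (!s i)) := by
  simp only [negateVar, signForm, map_add, map_one, map_sum, map_mul, aeval_X]
  congr 1
  refine sum_congr rfl fun j _ => ?_
  rcases eq_or_ne j i with rfl | hj
  · cases s j <;> simp
  · cases hs : s j <;> simp [hs, hj]

theorem negateVar_prod_signForm (i : ι) :
    negateVar i (∏ s, signForm s : MvPolynomial ι R) = ∏ s, signForm s := by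
  have hflip : Function.Involutive fun s : ι → Bool => Function.update s i (!s i) := by
    intro s; simp
  rw [map_prod]
  exact Fintype.prod_bijective _ hflip.bijective _ _ (negateVar_signForm i)

theorem coeff_prod_signForm_of_odd [NoZeroDivisors R] [CharZero R] {d : ι →₀ ℕ} {i : ι}
    (hd : Odd (d i)) : coeff d (∏ s : ι → Bool, signForm (R := R) s) = 0 := by
  have h := coeff_negateVar_of_odd hd (∏ s : ι → Bool, signForm (R := R) s)
  rwa [negateVar_prod_signForm, self_eq_neg] at h

theorem prod_signForm_eq_mul :
    ∏ s : ι → Bool, signForm (R := R) s =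
      (∏ s ∈ univ.filter (· ≠ fun _ => false), signForm s) * (1 - ∑ i, X i) := by
  rw [← signForm_const_false, filter_ne', prod_erase_mul _ _ (mem_univ _)]

theorem coeff_prod_signForm_ne_const_false [NoZeroDivisors R] [CharZero R] (T : Finset ι) :
    coeff (∑ j ∈ T, Finsupp.single j 1)
      (∏ s ∈ univ.filter (· ≠ fun _ => false), signForm (R := R) s) = T.card.factorial := by
  refine coeff_sum_single_eq_factorial ?_ (fun T ⟨i, hi⟩ => ?_) T
  · rw [map_prod]; exact prod_eq_one fun s _ => constantCoeff_signForm s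
  · rw [← prod_signForm_eq_mul]
    exact coeff_prod_signForm_of_odd (i := i) (by simp [sum_single_one_apply, hi])

end SignForm

theorem coeff_squarefree_product_except_all_minus_general (n : ℕ) :
    MvPolynomial.coeff (Finsupp.equivFunOnFinite.symm fun _ : Fin (n - 1) => 1)
      (∏ s ∈ Finset.univ.filter (fun s : Fin (n - 1) → Bool => s ≠ fun _ => false),
        ((1 + ∑ i, (if s i then 1 else -1) * MvPolynomial.X i) : MvPolynomial (Fin (n - 1)) ℤ))
      = (Nat.factorial (n - 1) : ℤ) ∨
    MvPolynomial.coeff (Finsupp.equivFunOnFinite.symm fun _ : Fin (n - 1) => 1)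
      (∏ s ∈ Finset.univ.filter (fun s : Fin (n - 1) → Bool => s ≠ fun _ => false),
        ((1 + ∑ i, (if s i then 1 else -1) * MvPolynomial.X i) : MvPolynomial (Fin (n - 1)) ℤ))
      = -(Nat.factorial (n - 1) : ℤ) := by
  left
  have hmono : (Finsupp.equivFunOnFinite.symm fun _ : Fin (n - 1) => 1) =
      ∑ j ∈ univ, Finsupp.single j 1 := by
    ext i; simp [sum_single_one_apply]
  have h := coeff_prod_signForm_ne_const_false (R := ℤ) (univ : Finset (Fin (n - 1)))
  rwa [card_univ, Fintype.card_fin, ← hmono] at h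

open MvPolynomial in
/-- Let `g = ∏ (1 + ∑ eᵢ zᵢ)` over all sign vectors `(eᵢ) ∈ {1,-1}^(n-1)` except the
all-minus vector (`s i = true` encodes `eᵢ = +1`). Then the coefficient of the
squarefree monomial `z₁⋯z_{n-1}` in `g` is `±(n-1)!`. -/
theorem coeff_squarefree_product_except_all_minus (n : ℕ) (hn : 2 ≤ n) :
    MvPolynomial.coeff (Finsupp.equivFunOnFinite.symm fun _ : Fin (n - 1) => 1)
      (∏ s ∈ Finset.univ.filter (fun s : Fin (n - 1) → Bool => s ≠ fun _ => false),
        ((1 + ∑ i, (if s i then 1 else -1) * MvPolynomial.X i) : MvPolynomial (Fin (n - 1)) ℤ))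
      = (Nat.factorial (n - 1) : ℤ) ∨
    MvPolynomial.coeff (Finsupp.equivFunOnFinite.symm fun _ : Fin (n - 1) => 1)
      (∏ s ∈ Finset.univ.filter (fun s : Fin (n - 1) → Bool => s ≠ fun _ => false),
        ((1 + ∑ i, (if s i then 1 else -1) * MvPolynomial.X i) : MvPolynomial (Fin (n - 1)) ℤ))
      = -(Nat.factorial (n - 1) : ℤ) :=
  coeff_squarefree_product_except_all_minus_general n
end

section
/- Let $R = \mathbb{Z}[c_2,\dots,c_{2n}, y]/(2c_{odd},\; y\cdot c_{odd},\; y^2 + (-1)^n 2^{2n-2} c_{2n})$, where $c_{odd}$ ranges over the generators $c_i$ with $i$ odd. Then the element $y$ is not equal to $2r$ for any $r \in R$; that is, $y$ is not divisible by $2$ in $R$. -/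
noncomputable section
open MvPolynomial

/-- The defining ideal of `CH^*BSO(2n) = ℤ[c₂,…,c₂ₙ,y]/(2c_odd, y·c_odd, y² + (-1)ⁿ2^(2n-2)c₂ₙ)`.
The variable `some i` represents `c_{i+2}` and `none` represents `y`. -/
def chowIdeal (n : ℕ) (hn : 1 ≤ n) : Ideal (MvPolynomial (Option (Fin (2 * n - 1))) ℤ) :=
  Ideal.span
    ({p | ∃ i : Fin (2 * n - 1), Odd (i.val + 2) ∧ p = 2 * X (some i)} ∪
     {p | ∃ i : Fin (2 * n - 1), Odd (i.val + 2) ∧ p = X none * X (some i)} ∪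
     {X none ^ 2 + (-1 : MvPolynomial (Option (Fin (2 * n - 1))) ℤ) ^ n * 2 ^ (2 * n - 2) *
        X (some ⟨2 * n - 2, by omega⟩)})

/-!
Sending every `cᵢ` to `0` and `y` to the dual number `ε` kills all relations (as `ε² = 0`), so it
gives a ring map `R → ℤ[ε]`. If `y = 2r` in `R`, then `ε = 2s` in `ℤ[ε]`, and comparing
`ε`-coefficients gives `1 = 2 s₁` in `ℤ`.
-/

theorem DualNumber.two_dvd_one_of_two_dvd_eps {R : Type*} [CommSemiring R]
    (h : (2 : DualNumber R) ∣ DualNumber.eps) : (2 : R) ∣ 1 := by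
  obtain ⟨s, hs⟩ := h
  refine ⟨s.snd, ?_⟩
  simpa [two_mul] using congrArg TrivSqZeroExt.snd hs

def chowToDualNumber (m : ℕ) : MvPolynomial (Option (Fin m)) ℤ →+* DualNumber ℤ :=
  eval₂Hom (Int.castRingHom _) fun o => o.elim DualNumber.eps 0

theorem chowIdeal_le_ker_chowToDualNumber (n : ℕ) (hn : 1 ≤ n) :
    chowIdeal n hn ≤ RingHom.ker (chowToDualNumber (2 * n - 1)) := by
  rw [chowIdeal, Ideal.span_le]
  rintro p ((⟨i, -, rfl⟩ | ⟨i, -, rfl⟩) | rfl) <;>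
    simp [chowToDualNumber, DualNumber.eps_mul_eps, sq]

/-- In `R = ℤ[c₂,…,c₂ₙ,y]/(2c_odd, y·c_odd, y² + (-1)ⁿ2^(2n-2)c₂ₙ)`, the class `y` is
not divisible by `2`. -/
theorem y_not_divisible_by_two (n : ℕ) (hn : 1 ≤ n) :
    ¬ ∃ r : MvPolynomial (Option (Fin (2 * n - 1))) ℤ ⧸ chowIdeal n hn,
      Ideal.Quotient.mk (chowIdeal n hn) (X none) = 2 * r := by
  rintro ⟨r, hr⟩
  let ψ := Ideal.Quotient.lift (chowIdeal n hn) (chowToDualNumber (2 * n - 1))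
    fun _ ha => RingHom.mem_ker.mp (chowIdeal_le_ker_chowToDualNumber n hn ha)
  have hε : (2 : DualNumber ℤ) ∣ DualNumber.eps := by
    refine ⟨ψ r, ?_⟩
    have h := congrArg ψ hr
    rwa [map_mul, map_ofNat, Ideal.Quotient.lift_mk, chowToDualNumber, eval₂Hom_X',
      Option.elim_none] at h
  exact absurd (DualNumber.two_dvd_one_of_two_dvd_eps hε) (by decide)
end
end

section
/- In the ring $R = \mathbb{Z}[c_2,\dots,c_{2n},y]/(2c_{odd}, y c_{odd}, y^2 + (-1)^n 2^{2n-2} c_{2n})$, the element $c_i$ for odd $i$ is a nonzero $2$-torsion element: $2 c_i = 0$ but $c_i \ne 0$ (for $3 \le i \le 2n-1$ odd). -/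
noncomputable section
open MvPolynomial

/-- In `R = ℤ[c₂,…,c₂ₙ,y]/(2c_odd, y·c_odd, y² + (-1)ⁿ2^(2n-2)c₂ₙ)`, each odd `cᵢ` is a
nonzero 2-torsion element. -/
theorem odd_chern_nonzero_two_torsion (n : ℕ) (hn : 1 ≤ n) (i : Fin (2 * n - 1))
    (hi : Odd (i.val + 2)) :
    2 * Ideal.Quotient.mk (chowIdeal n hn) (X (some i)) = 0 ∧
    Ideal.Quotient.mk (chowIdeal n hn) (X (some i)) ≠ 0 := by
  have hn2 : 2 ≤ n := by
    by_contra h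
    have hn1 : n = 1 := by omega
    subst hn1
    have h0 : i.val = 0 := by omega
    rw [h0] at hi
    exact (by decide : ¬ Odd 2) hi
  constructor
  · rw [show (2 : (MvPolynomial (Option (Fin (2 * n - 1))) ℤ) ⧸ chowIdeal n hn) *
        Ideal.Quotient.mk (chowIdeal n hn) (X (some i)) =
        Ideal.Quotient.mk (chowIdeal n hn) (2 * X (some i)) by rw [map_mul, map_ofNat],
      Ideal.Quotient.eq_zero_iff_mem]
    exact Ideal.subset_span (Or.inl (Or.inl ⟨i, hi, rfl⟩))
  · intro h
    rw [Ideal.Quotient.eq_zero_iff_mem] at h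
    set f : MvPolynomial (Option (Fin (2 * n - 1))) ℤ →+* MvPolynomial (Fin (2 * n - 1)) (ZMod 2) :=
      (aeval (fun o : Option (Fin (2 * n - 1)) => o.elim 0 X)).toRingHom with hf
    have h2 : (2 : MvPolynomial (Fin (2 * n - 1)) (ZMod 2)) = 0 := by
      have := CharP.cast_eq_zero (MvPolynomial (Fin (2 * n - 1)) (ZMod 2)) 2
      exact_mod_cast this
    have hker : chowIdeal n hn ≤ RingHom.ker f := by
      rw [chowIdeal, Ideal.span_le]
      rintro p ((⟨j, hj, rfl⟩ | ⟨j, hj, rfl⟩) | rfl)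
      · simp [RingHom.mem_ker, hf, h2]
      · simp [RingHom.mem_ker, hf]
      · have hpow : (2 : MvPolynomial (Fin (2 * n - 1)) (ZMod 2)) ^ (2 * n - 2) = 0 := by
          rw [h2, zero_pow]; omega
        simp [RingHom.mem_ker, hf, hpow]
    have := hker h
    rw [RingHom.mem_ker] at this
    simp [hf] at this
end
end

section
/- In the ring $R = \mathbb{Z}[c_2,\dots,c_{2n},y]/(2c_{odd}, y c_{odd}, y^2+(-1)^n 2^{2n-2} c_{2n})$, the torsion subgroup of the underlying abelian group of $R$ is precisely the ideal generated by the classes $c_i$ with $i$ odd, and every torsion element is killed by $2$. -/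
/-!
Modulo the odd classes `cᵢ`, the relations of `chowIdeal` collapse to the single relation
`f = y² + (-1)ⁿ 2^(2n-2) c₂ₙ`, which is monic in `y` with coefficients in the even classes.
Setting the odd variables to zero reduces membership in `(c_odd, f)` to divisibility by `f`,
and a monic polynomial that divides `m * g` with `m ≠ 0` divides `g`. So `m * p ∈ chowIdeal`
forces `p ∈ (c_odd, f) = chowIdeal + (c_odd)`. Conversely `2 c_odd ∈ chowIdeal`.
-/

noncomputable section
open MvPolynomial

namespace Polynomial

variable {A : Type*} [CommRing A] [IsDomain A]

theorem Monic.dvd_of_dvd_C_mul {F g : A[X]} (hF : F.Monic) {r : A} (hr : r ≠ 0)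
    (h : F ∣ C r * g) : F ∣ g := by
  rw [← modByMonic_eq_zero_iff_dvd hF, ← smul_eq_C_mul, smul_modByMonic] at h
  exact (modByMonic_eq_zero_iff_dvd hF).mp ((smul_eq_zero.mp h).resolve_left hr)

end Polynomial

namespace MvPolynomial

variable {R σ : Type*} [CommRing R]

open Classical in
def killVars (S : Set σ) : MvPolynomial σ R →ₐ[R] MvPolynomial σ R :=
  aeval fun i => if i ∈ S then 0 else X i

theorem killVars_X_of_mem {S : Set σ} {i : σ} (hi : i ∈ S) :
    killVars (R := R) S (X i) = 0 := by
  simp [killVars, hi]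

theorem killVars_X_of_notMem {S : Set σ} {i : σ} (hi : i ∉ S) :
    killVars (R := R) S (X i) = X i := by
  simp [killVars, hi]

theorem sub_killVars_mem_span_X_image (S : Set σ) (p : MvPolynomial σ R) :
    p - killVars S p ∈ Ideal.span (X '' S : Set (MvPolynomial σ R)) := by
  set I := Ideal.span (X '' S : Set (MvPolynomial σ R))
  have hmk : (Ideal.Quotient.mkₐ R I).comp (killVars S) = Ideal.Quotient.mkₐ R I := by
    refine algHom_ext fun i => ?_
    by_cases hi : i ∈ S
    · simpa [killVars_X_of_mem hi, eq_comm (a := (0 : _ ⧸ I)), Ideal.Quotient.eq_zero_iff_mem]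
        using (Ideal.subset_span ⟨i, hi, rfl⟩ : X i ∈ I)
    · simp [killVars_X_of_notMem hi]
  rw [← Ideal.Quotient.eq, ← Ideal.Quotient.mkₐ_eq_mk R, ← AlgHom.comp_apply, hmk]

theorem span_X_image_sup_span_singleton {S : Set σ} {f : MvPolynomial σ R}
    (hf : killVars S f = f) :
    Ideal.span (X '' S) ⊔ Ideal.span {f} = (Ideal.span {f}).comap (killVars S) := by
  refine le_antisymm (sup_le ?_ ?_) fun p hp => ?_
  · rw [Ideal.span_le]
    rintro _ ⟨i, hi, rfl⟩
    simp [killVars_X_of_mem hi]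
  · rw [Ideal.span_le, Set.singleton_subset_iff]
    show f ∈ (Ideal.span {f}).comap (killVars S)
    rw [Ideal.mem_comap, hf]
    exact Ideal.mem_span_singleton_self f
  · rw [← sub_add_cancel p (killVars S p)]
    exact Ideal.add_mem _ (Ideal.mem_sup_left (sub_killVars_mem_span_X_image S p))
      (Ideal.mem_sup_right hp)

theorem dvd_of_dvd_C_mul [IsDomain R] {f g : MvPolynomial (Option σ) R}
    (hf : (optionEquivLeft R σ f).Monic) {r : R} (hr : r ≠ 0) (h : f ∣ C r * g) : f ∣ g := by
  rw [← map_dvd_iff (optionEquivLeft R σ)] at h ⊢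
  rw [map_mul, optionEquivLeft_C] at h
  exact hf.dvd_of_dvd_C_mul (C_ne_zero.mpr hr) h

end MvPolynomial

theorem Ideal.Quotient.nsmul_mk_eq_zero_iff {R : Type*} [CommRing R] {I : Ideal R} (m : ℕ)
    (p : R) : m • Ideal.Quotient.mk I p = 0 ↔ (m : R) * p ∈ I := by
  rw [nsmul_eq_mul, ← map_natCast (Ideal.Quotient.mk I), ← map_mul,
    Ideal.Quotient.eq_zero_iff_mem]

namespace ChowRing

variable (n : ℕ) (hn : 1 ≤ n)

local notation "𝒫" => MvPolynomial (Option (Fin (2 * n - 1))) ℤ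

def oddChernVars : Set (Option (Fin (2 * n - 1))) := some '' {i | Odd (i.val + 2)}

def chowRelation : 𝒫 :=
  X none ^ 2 + (-1 : 𝒫) ^ n * 2 ^ (2 * n - 2) * X (some ⟨2 * n - 2, by omega⟩)

theorem killVars_chowRelation :
    killVars (oddChernVars n) (chowRelation n hn) = chowRelation n hn := by
  have hnone : none ∉ oddChernVars n := by simp [oddChernVars]
  have htop : some ⟨2 * n - 2, by omega⟩ ∉ oddChernVars n := by
    rintro ⟨_, hodd, hi⟩
    cases Option.some.inj hi
    exact Nat.not_odd_iff_even.mpr ⟨n, by simp; omega⟩ hodd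
  simp [chowRelation, killVars_X_of_notMem hnone, killVars_X_of_notMem htop, map_ofNat]

theorem monic_optionEquivLeft_chowRelation :
    (optionEquivLeft ℤ _ (chowRelation n hn)).Monic := by
  have : optionEquivLeft ℤ _ (chowRelation n hn) = Polynomial.X ^ 2 +
      Polynomial.C ((-1) ^ n * 2 ^ (2 * n - 2) * X ⟨2 * n - 2, by omega⟩) := by
    simp [chowRelation, optionEquivLeft_X_none, optionEquivLeft_X_some, map_ofNat]
  rw [this]
  exact Polynomial.monic_X_pow_add (Polynomial.degree_C_le.trans_lt (by norm_num))

theorem chowIdeal_sup_span_oddChernVars :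
    chowIdeal n hn ⊔ Ideal.span (X '' oddChernVars n) =
      Ideal.span (X '' oddChernVars n) ⊔ Ideal.span {chowRelation n hn} := by
  refine le_antisymm (sup_le ?_ le_sup_left) (sup_le le_sup_right ?_)
  · rw [chowIdeal, Ideal.span_le]
    rintro p ((⟨i, hi, rfl⟩ | ⟨i, hi, rfl⟩) | rfl)
    iterate 2
      exact Ideal.mul_mem_left _ _
        (Ideal.mem_sup_left (Ideal.subset_span ⟨_, ⟨i, hi, rfl⟩, rfl⟩))
    · exact Ideal.mem_sup_right (Ideal.mem_span_singleton_self _)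
  · rw [Ideal.span_le, Set.singleton_subset_iff]
    exact Ideal.mem_sup_left (Ideal.subset_span (Set.mem_union_right _ rfl))

theorem two_mul_mem_chowIdeal {p : 𝒫} (hp : p ∈ Ideal.span (X '' oddChernVars n)) :
    2 * p ∈ chowIdeal n hn := by
  induction hp using Submodule.span_induction with
  | mem q hq =>
    obtain ⟨_, ⟨i, hi, rfl⟩, rfl⟩ := hq
    exact Ideal.subset_span (Or.inl (Or.inl ⟨i, hi, rfl⟩))
  | zero => simp
  | add a b _ _ ha hb => simpa only [mul_add] using Ideal.add_mem _ ha hb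
  | smul r a _ ha => simpa only [smul_eq_mul, mul_left_comm] using Ideal.mul_mem_left _ r ha

theorem two_mul_mem_chowIdeal_of_mem {p : 𝒫}
    (hp : p ∈ Ideal.span (X '' oddChernVars n) ⊔ Ideal.span {chowRelation n hn}) :
    2 * p ∈ chowIdeal n hn := by
  rw [← chowIdeal_sup_span_oddChernVars, Submodule.mem_sup] at hp
  obtain ⟨a, ha, b, hb, rfl⟩ := hp
  rw [mul_add]
  exact Ideal.add_mem _ (Ideal.mul_mem_left _ _ ha) (two_mul_mem_chowIdeal n hn hb)

theorem mem_of_natCast_mul_mem_chowIdeal {m : ℕ} (hm : m ≠ 0) {p : 𝒫}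
    (h : (m : 𝒫) * p ∈ chowIdeal n hn) :
    p ∈ Ideal.span (X '' oddChernVars n) ⊔ Ideal.span {chowRelation n hn} := by
  replace h := chowIdeal_sup_span_oddChernVars n hn ▸ Ideal.mem_sup_left h
  rw [span_X_image_sup_span_singleton (killVars_chowRelation n hn), Ideal.mem_comap,
    Ideal.mem_span_singleton] at h ⊢
  rw [map_mul, map_natCast, ← map_natCast (C : ℤ →+* 𝒫)] at h
  exact dvd_of_dvd_C_mul (monic_optionEquivLeft_chowRelation n hn) (by exact_mod_cast hm) h

theorem mk_mem_span_mk_X_odd_iff (p : 𝒫) :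
    Ideal.Quotient.mk (chowIdeal n hn) p ∈ Ideal.span {q | ∃ i : Fin (2 * n - 1),
      Odd (i.val + 2) ∧ q = Ideal.Quotient.mk (chowIdeal n hn) (X (some i))} ↔
      p ∈ Ideal.span (X '' oddChernVars n) ⊔ Ideal.span {chowRelation n hn} := by
  have hset : {q | ∃ i : Fin (2 * n - 1), Odd (i.val + 2) ∧
      q = Ideal.Quotient.mk (chowIdeal n hn) (X (some i))} =
      Ideal.Quotient.mk _ '' (X '' oddChernVars n) := by
    ext q
    simp [oddChernVars, eq_comm]
  rw [hset, ← Ideal.map_span, Ideal.mem_quotient_iff_mem_sup, sup_comm,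
    chowIdeal_sup_span_oddChernVars]

end ChowRing

open ChowRing in
/-- In `R = ℤ[c₂,…,c₂ₙ,y]/(2c_odd, y·c_odd, y² + (-1)ⁿ2^(2n-2)c₂ₙ)`, the torsion
subgroup of the underlying abelian group is exactly the ideal generated by the odd `cᵢ`,
and every torsion element is killed by `2`. -/
theorem torsion_eq_odd_chern_ideal (n : ℕ) (hn : 1 ≤ n)
    (x : MvPolynomial (Option (Fin (2 * n - 1))) ℤ ⧸ chowIdeal n hn) :
    ((∃ m : ℕ, m ≠ 0 ∧ m • x = 0) ↔
      x ∈ Ideal.span {p : MvPolynomial (Option (Fin (2 * n - 1))) ℤ ⧸ chowIdeal n hn |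
        ∃ i : Fin (2 * n - 1), Odd (i.val + 2) ∧
          p = Ideal.Quotient.mk (chowIdeal n hn) (X (some i))}) ∧
    ((∃ m : ℕ, m ≠ 0 ∧ m • x = 0) → 2 • x = 0) := by
  obtain ⟨p, rfl⟩ := Ideal.Quotient.mk_surjective x
  simp only [mk_mem_span_mk_X_odd_iff, Ideal.Quotient.nsmul_mk_eq_zero_iff, Nat.cast_ofNat]
  have torsion_mem (h : ∃ m : ℕ, m ≠ 0 ∧ (m : _) * p ∈ chowIdeal n hn) :
      p ∈ Ideal.span (X '' oddChernVars n) ⊔ Ideal.span {chowRelation n hn} :=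
    let ⟨_, hm, hmp⟩ := h
    mem_of_natCast_mul_mem_chowIdeal n hn hm hmp
  have two_torsion := two_mul_mem_chowIdeal_of_mem n hn (p := p)
  exact ⟨⟨torsion_mem, fun h => ⟨2, two_ne_zero, by exact_mod_cast two_torsion h⟩⟩,
    two_torsion ∘ torsion_mem⟩
end
end
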